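/- There do not exist vectors w_0, …, w_8 ∈ ℝ² and reals h_0, …, h_8 such that (w_0,…,w_8) is an admissible extended-Gale configuration for C_6(9) and the intersection heights satisfy the chain of strict inequalities z_{038} < z_{058} < z_{258} < z_{125} < z_{256} < z_{056} < z_{456} < z_{458} < z_{145} < z_{345} < z_{034} < z_{234} < z_{347} < z_{147} < z_{014} < z_{018} < z_{012} < z_{016} < z_{036} < z_{236} < z_{367} < z_{567} < z_{167} < z_{678} < z_{478} < z_{078} < z_{278} < z_{127} < z_{123} < z_{238}. (This is the nonrealizability of the Hamilton HK AOF orientation NR_5^6 of the graph of C_6(9)^Δ.) -/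
import Mathlib

noncomputable section

/-- For `v = (x, y) ∈ ℝ²`, `u · v^⊥ = det(u, v)` where `v^⊥ = (y, -x)`. -/
def dperp (u v : ℝ × ℝ) : ℝ := u.1 * v.2 - u.2 * v.1

/-- `[p q r]`: the determinant of the 3×3 matrix with columns `(pₓ,p_y,1)`, `(qₓ,q_y,1)`,
`(rₓ,r_y,1)`. -/
def tdet (p q r : ℝ × ℝ) : ℝ :=
  p.1 * (q.2 - r.2) - q.1 * (p.2 - r.2) + r.1 * (p.2 - q.2)

/-- The intersection height
`z(u,h_u; v,h_v; w,h_w) = ((u·v^⊥)·h_w + (w·u^⊥)·h_v + (v·w^⊥)·h_u) / [u v w]`. -/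
def iheight (u v w : ℝ × ℝ) (hu hv hw : ℝ) : ℝ :=
  (dperp u v * hw + dperp w u * hv + dperp v w * hu) / tdet u v w

/-- The 30 vertex triples of `C₆(9)^Δ`: complements in `{0,…,8}` of the facets of the
cyclic polytope `C₆(9)` given by Gale's evenness criterion. -/
def C69triples : Set (Fin 9 × Fin 9 × Fin 9) :=
  {(0, 1, 2), (0, 1, 4), (0, 1, 6), (0, 1, 8), (0, 3, 4), (0, 3, 6), (0, 3, 8), (0, 5, 6), (0, 5, 8), (0, 7, 8), (1, 2, 3), (1, 2, 5), (1, 2, 7), (1, 4, 5), (1, 4, 7), (1, 6, 7), (2, 3, 4), (2, 3, 6), (2, 3, 8), (2, 5, 6), (2, 5, 8), (2, 7, 8), (3, 4, 5), (3, 4, 7), (3, 6, 7), (4, 5, 6), (4, 5, 8), (4, 7, 8), (5, 6, 7), (6, 7, 8)}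

/-- `(w₀, …, w₈)` is an admissible extended-Gale configuration for `C₆(9)`: the `w_a` are
positive multiples of unit vectors in clockwise radial order `0, 2, 4, 6, 8, 1, 3, 5, 7`
around the origin, a 3-element subset `{i < j < k}` of `{0,…,8}` has `0` in the interior
of `conv {wᵢ, wⱼ, w_k}` iff it is one of the 30 vertex triples, and each vertex triple
has `[wᵢ wⱼ w_k] > 0`. -/
def AdmissibleC69 (w : Fin 9 → ℝ × ℝ) : Prop :=
  (∃ θ r : Fin 9 → ℝ,
    (∀ a : Fin 9, 0 < r a ∧ w a = (r a * Real.cos (θ a), r a * Real.sin (θ a))) ∧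
    θ 0 > θ 2 ∧ θ 2 > θ 4 ∧ θ 4 > θ 6 ∧ θ 6 > θ 8 ∧ θ 8 > θ 1 ∧ θ 1 > θ 3 ∧ θ 3 > θ 5 ∧
    θ 5 > θ 7 ∧ θ 7 > θ 0 - 2 * Real.pi) ∧
  (∀ i j k : Fin 9, i < j → j < k →
    ((0 : ℝ × ℝ) ∈ interior (convexHull ℝ {w i, w j, w k}) ↔ (i, j, k) ∈ C69triples)) ∧
  (∀ i j k : Fin 9, (i, j, k) ∈ C69triples → 0 < tdet (w i) (w j) (w k))

/-- The intersection height `z_{ijk}` determined by the configuration `w` and the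
lifting heights `h`. -/
def zC69 (w : Fin 9 → ℝ × ℝ) (h : Fin 9 → ℝ) (i j k : Fin 9) : ℝ :=
  iheight (w i) (w j) (w k) (h i) (h j) (h k)

private lemma pos_of_pos_mul {a b : ℝ} (ha : 0 < a) (h : 0 < a * b) : 0 < b := by
  nlinarith
private lemma neg_of_pos_mul {a b : ℝ} (ha : 0 < a) (h : a * b < 0) : b < 0 := by
  nlinarith
private lemma pos_of_neg_mul {a b : ℝ} (ha : a < 0) (h : a * b < 0) : 0 < b := by
  nlinarith
private lemma neg_of_neg_mul {a b : ℝ} (ha : a < 0) (h : 0 < a * b) : b < 0 := by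
  nlinarith

private lemma dperp_pos_of_mem_interior (a b c : ℝ × ℝ)
    (hT : 0 < tdet a b c)
    (hI : (0 : ℝ × ℝ) ∈ interior (convexHull ℝ ({a, b, c} : Set (ℝ × ℝ)))) :
    0 < dperp a b := by
  have hconv : Convex ℝ {x : ℝ × ℝ | 0 ≤ tdet a b x} := by
    intro x hx y hy s t hs ht hst
    simp only [Set.mem_setOf_eq] at hx hy ⊢
    have h1 : (s • x + t • y).1 = s * x.1 + t * y.1 := rfl
    have h2 : (s • x + t • y).2 = s * x.2 + t * y.2 := rfl
    have key : tdet a b (s • x + t • y) = s * tdet a b x + t * tdet a b y := by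
      simp only [tdet, h1, h2]
      linear_combination (b.1 * a.2 - a.1 * b.2) * hst
    nlinarith [mul_nonneg hs hx, mul_nonneg ht hy]
  have hsub : convexHull ℝ ({a, b, c} : Set (ℝ × ℝ)) ⊆ {x : ℝ × ℝ | 0 ≤ tdet a b x} := by
    apply convexHull_min _ hconv
    intro x hx
    simp only [Set.mem_insert_iff, Set.mem_singleton_iff] at hx
    rcases hx with h | h | h
    · have hz : tdet a b a = 0 := by simp only [tdet]; ring
      simp only [Set.mem_setOf_eq, h, hz, le_refl]
    · have hz : tdet a b b = 0 := by simp only [tdet]; ring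
      simp only [Set.mem_setOf_eq, h, hz, le_refl]
    · simp only [Set.mem_setOf_eq, h]; linarith
  rw [mem_interior_iff_mem_nhds, Metric.mem_nhds_iff] at hI
  obtain ⟨ε, hε, hball⟩ := hI
  have hM : (0:ℝ) < |a.2 - b.2| + |b.1 - a.1| + 1 := by positivity
  set δ : ℝ := ε / (2 * (|a.2 - b.2| + |b.1 - a.1| + 1)) with hδdef
  have hδ : 0 < δ := by positivity
  have hmem : ((-(δ * (a.2 - b.2)), -(δ * (b.1 - a.1))) : ℝ × ℝ) ∈ Metric.ball (0 : ℝ × ℝ) ε := by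
    rw [Metric.mem_ball, dist_zero_right, Prod.norm_def]
    have e1 : ‖(-(δ * (a.2 - b.2)))‖ = δ * |a.2 - b.2| := by
      rw [Real.norm_eq_abs, abs_neg, abs_mul, abs_of_pos hδ]
    have e2 : ‖(-(δ * (b.1 - a.1)))‖ = δ * |b.1 - a.1| := by
      rw [Real.norm_eq_abs, abs_neg, abs_mul, abs_of_pos hδ]
    have hhalf : δ * (|a.2 - b.2| + |b.1 - a.1| + 1) = ε / 2 := by
      rw [hδdef]; field_simp
    apply max_lt
    · rw [e1]
      nlinarith [abs_nonneg (a.2 - b.2), abs_nonneg (b.1 - a.1), hδ, hε]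
    · rw [e2]
      nlinarith [abs_nonneg (a.2 - b.2), abs_nonneg (b.1 - a.1), hδ, hε]
  have hx0 := hsub (hball hmem)
  simp only [Set.mem_setOf_eq] at hx0
  have hid : tdet a b ((-(δ * (a.2 - b.2)), -(δ * (b.1 - a.1))) : ℝ × ℝ)
      = dperp a b - δ * ((a.2 - b.2)^2 + (b.1 - a.1)^2) := by
    simp only [tdet, dperp]; ring
  rw [hid] at hx0
  have hnz : (0:ℝ) < (a.2 - b.2)^2 + (b.1 - a.1)^2 := by
    rcases eq_or_ne (a.2 - b.2) 0 with hz1 | hz1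
    · rcases eq_or_ne (b.1 - a.1) 0 with hz2 | hz2
      · exfalso
        have : tdet a b c = 0 := by
          simp only [tdet]
          have e1 : a.2 = b.2 := by linarith [sub_eq_zero.mp hz1]
          have e2 : b.1 = a.1 := by linarith [sub_eq_zero.mp hz2]
          rw [e1, e2]; ring
        linarith
      · positivity
    · positivity
  nlinarith [mul_pos hδ hnz]

private lemma dperp_pos_of_mem_interior₂ (a b c : ℝ × ℝ)
    (hT : 0 < tdet a b c)
    (hI : (0 : ℝ × ℝ) ∈ interior (convexHull ℝ ({a, b, c} : Set (ℝ × ℝ)))) :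
    0 < dperp b c := by
  have hset : ({b, c, a} : Set (ℝ × ℝ)) = {a, b, c} := by
    ext x; simp only [Set.mem_insert_iff, Set.mem_singleton_iff]; tauto
  have hT' : 0 < tdet b c a := by
    have : tdet b c a = tdet a b c := by simp only [tdet]; ring
    linarith
  exact dperp_pos_of_mem_interior b c a hT' (by rw [hset]; exact hI)

private lemma dperp_pos_of_mem_interior₃ (a b c : ℝ × ℝ)
    (hT : 0 < tdet a b c)
    (hI : (0 : ℝ × ℝ) ∈ interior (convexHull ℝ ({a, b, c} : Set (ℝ × ℝ)))) :
    0 < dperp c a := by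
  have hset : ({c, a, b} : Set (ℝ × ℝ)) = {a, b, c} := by
    ext x; simp only [Set.mem_insert_iff, Set.mem_singleton_iff]; tauto
  have hT' : 0 < tdet c a b := by
    have : tdet c a b = tdet a b c := by simp only [tdet]; ring
    linarith
  exact dperp_pos_of_mem_interior c a b hT' (by rw [hset]; exact hI)

set_option maxHeartbeats 12000000 in
/-- **Nonrealizability of the Hamilton HK AOF orientation `NR₅⁶` of the graph of
`C₆(9)^Δ`**: no admissible extended-Gale configuration for `C₆(9)` with lifting heights
realizes the vertex ordering
`038 < 058 < 258 < 125 < 256 < 056 < 456 < 458 < 145 < 345 < 034 < 234 < 347 < 147 < 014 < 018 < 012 < 016 < 036 < 236 < 367 < 567 < 167 < 678 < 478 < 078 < 278 < 127 < 123 < 238`. -/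
theorem NR56_not_realizable :
    ¬ ∃ (w : Fin 9 → ℝ × ℝ) (h : Fin 9 → ℝ),
      AdmissibleC69 w ∧
      (zC69 w h 0 3 8 < zC69 w h 0 5 8 ∧
       zC69 w h 0 5 8 < zC69 w h 2 5 8 ∧
       zC69 w h 2 5 8 < zC69 w h 1 2 5 ∧
       zC69 w h 1 2 5 < zC69 w h 2 5 6 ∧
       zC69 w h 2 5 6 < zC69 w h 0 5 6 ∧
       zC69 w h 0 5 6 < zC69 w h 4 5 6 ∧
       zC69 w h 4 5 6 < zC69 w h 4 5 8 ∧
       zC69 w h 4 5 8 < zC69 w h 1 4 5 ∧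
       zC69 w h 1 4 5 < zC69 w h 3 4 5 ∧
       zC69 w h 3 4 5 < zC69 w h 0 3 4 ∧
       zC69 w h 0 3 4 < zC69 w h 2 3 4 ∧
       zC69 w h 2 3 4 < zC69 w h 3 4 7 ∧
       zC69 w h 3 4 7 < zC69 w h 1 4 7 ∧
       zC69 w h 1 4 7 < zC69 w h 0 1 4 ∧
       zC69 w h 0 1 4 < zC69 w h 0 1 8 ∧
       zC69 w h 0 1 8 < zC69 w h 0 1 2 ∧
       zC69 w h 0 1 2 < zC69 w h 0 1 6 ∧
       zC69 w h 0 1 6 < zC69 w h 0 3 6 ∧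
       zC69 w h 0 3 6 < zC69 w h 2 3 6 ∧
       zC69 w h 2 3 6 < zC69 w h 3 6 7 ∧
       zC69 w h 3 6 7 < zC69 w h 5 6 7 ∧
       zC69 w h 5 6 7 < zC69 w h 1 6 7 ∧
       zC69 w h 1 6 7 < zC69 w h 6 7 8 ∧
       zC69 w h 6 7 8 < zC69 w h 4 7 8 ∧
       zC69 w h 4 7 8 < zC69 w h 0 7 8 ∧
       zC69 w h 0 7 8 < zC69 w h 2 7 8 ∧
       zC69 w h 2 7 8 < zC69 w h 1 2 7 ∧
       zC69 w h 1 2 7 < zC69 w h 1 2 3 ∧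
       zC69 w h 1 2 3 < zC69 w h 2 3 8) := by
  rintro ⟨w, h, ⟨⟨-, hIff, hTpos⟩, hz0, hz1, hz2, hz3, hz4, hz5, hz6, hz7, hz8, hz9, hz10, hz11, hz12, hz13, hz14, hz15, hz16, hz17, hz18, hz19, hz20, hz21, hz22, hz23, hz24, hz25, hz26, hz27, hz28⟩⟩
  -- positivity of the vertex-triple determinants
  have hT012 : 0 < tdet (w 0) (w 1) (w 2) := hTpos 0 1 2 (by simp [C69triples])
  have hT016 : 0 < tdet (w 0) (w 1) (w 6) := hTpos 0 1 6 (by simp [C69triples])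
  have hT034 : 0 < tdet (w 0) (w 3) (w 4) := hTpos 0 3 4 (by simp [C69triples])
  have hT036 : 0 < tdet (w 0) (w 3) (w 6) := hTpos 0 3 6 (by simp [C69triples])
  have hT038 : 0 < tdet (w 0) (w 3) (w 8) := hTpos 0 3 8 (by simp [C69triples])
  have hT056 : 0 < tdet (w 0) (w 5) (w 6) := hTpos 0 5 6 (by simp [C69triples])
  have hT058 : 0 < tdet (w 0) (w 5) (w 8) := hTpos 0 5 8 (by simp [C69triples])
  have hT125 : 0 < tdet (w 1) (w 2) (w 5) := hTpos 1 2 5 (by simp [C69triples])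
  have hT145 : 0 < tdet (w 1) (w 4) (w 5) := hTpos 1 4 5 (by simp [C69triples])
  have hT236 : 0 < tdet (w 2) (w 3) (w 6) := hTpos 2 3 6 (by simp [C69triples])
  have hT256 : 0 < tdet (w 2) (w 5) (w 6) := hTpos 2 5 6 (by simp [C69triples])
  have hT258 : 0 < tdet (w 2) (w 5) (w 8) := hTpos 2 5 8 (by simp [C69triples])
  have hT345 : 0 < tdet (w 3) (w 4) (w 5) := hTpos 3 4 5 (by simp [C69triples])
  have hT367 : 0 < tdet (w 3) (w 6) (w 7) := hTpos 3 6 7 (by simp [C69triples])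
  have hT456 : 0 < tdet (w 4) (w 5) (w 6) := hTpos 4 5 6 (by simp [C69triples])
  have hT458 : 0 < tdet (w 4) (w 5) (w 8) := hTpos 4 5 8 (by simp [C69triples])
  have hT567 : 0 < tdet (w 5) (w 6) (w 7) := hTpos 5 6 7 (by simp [C69triples])
  have hT678 : 0 < tdet (w 6) (w 7) (w 8) := hTpos 6 7 8 (by simp [C69triples])
  -- origin in the interior of the relevant triangles
  have hI012 : (0 : ℝ × ℝ) ∈ interior (convexHull ℝ ({w 0, w 1, w 2} : Set (ℝ × ℝ))) :=
    (hIff 0 1 2 (by decide) (by decide)).mpr (by simp [C69triples])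
  have hI036 : (0 : ℝ × ℝ) ∈ interior (convexHull ℝ ({w 0, w 3, w 6} : Set (ℝ × ℝ))) :=
    (hIff 0 3 6 (by decide) (by decide)).mpr (by simp [C69triples])
  have hI038 : (0 : ℝ × ℝ) ∈ interior (convexHull ℝ ({w 0, w 3, w 8} : Set (ℝ × ℝ))) :=
    (hIff 0 3 8 (by decide) (by decide)).mpr (by simp [C69triples])
  have hI236 : (0 : ℝ × ℝ) ∈ interior (convexHull ℝ ({w 2, w 3, w 6} : Set (ℝ × ℝ))) :=
    (hIff 2 3 6 (by decide) (by decide)).mpr (by simp [C69triples])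
  have hI256 : (0 : ℝ × ℝ) ∈ interior (convexHull ℝ ({w 2, w 5, w 6} : Set (ℝ × ℝ))) :=
    (hIff 2 5 6 (by decide) (by decide)).mpr (by simp [C69triples])
  have hI258 : (0 : ℝ × ℝ) ∈ interior (convexHull ℝ ({w 2, w 5, w 8} : Set (ℝ × ℝ))) :=
    (hIff 2 5 8 (by decide) (by decide)).mpr (by simp [C69triples])
  have hI345 : (0 : ℝ × ℝ) ∈ interior (convexHull ℝ ({w 3, w 4, w 5} : Set (ℝ × ℝ))) :=
    (hIff 3 4 5 (by decide) (by decide)).mpr (by simp [C69triples])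
  have hI456 : (0 : ℝ × ℝ) ∈ interior (convexHull ℝ ({w 4, w 5, w 6} : Set (ℝ × ℝ))) :=
    (hIff 4 5 6 (by decide) (by decide)).mpr (by simp [C69triples])
  have hI678 : (0 : ℝ × ℝ) ∈ interior (convexHull ℝ ({w 6, w 7, w 8} : Set (ℝ × ℝ))) :=
    (hIff 6 7 8 (by decide) (by decide)).mpr (by simp [C69triples])
  -- sign facts for the dperp atoms
  have hd01 : 0 < dperp (w 0) (w 1) := dperp_pos_of_mem_interior (w 0) (w 1) (w 2) hT012 hI012
  have hd06' : 0 < dperp (w 6) (w 0) := dperp_pos_of_mem_interior₃ (w 0) (w 3) (w 6) hT036 hI036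
  have hd06 : dperp (w 0) (w 6) < 0 := by simp only [dperp] at hd06' ⊢; linarith
  have hd08' : 0 < dperp (w 8) (w 0) := dperp_pos_of_mem_interior₃ (w 0) (w 3) (w 8) hT038 hI038
  have hd08 : dperp (w 0) (w 8) < 0 := by simp only [dperp] at hd08' ⊢; linarith
  have hd25 : 0 < dperp (w 2) (w 5) := dperp_pos_of_mem_interior (w 2) (w 5) (w 8) hT258 hI258
  have hd34 : 0 < dperp (w 3) (w 4) := dperp_pos_of_mem_interior (w 3) (w 4) (w 5) hT345 hI345
  have hd36 : 0 < dperp (w 3) (w 6) := dperp_pos_of_mem_interior₂ (w 2) (w 3) (w 6) hT236 hI236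
  have hd45 : 0 < dperp (w 4) (w 5) := dperp_pos_of_mem_interior (w 4) (w 5) (w 6) hT456 hI456
  have hd56 : 0 < dperp (w 5) (w 6) := dperp_pos_of_mem_interior₂ (w 2) (w 5) (w 6) hT256 hI256
  have hd58 : 0 < dperp (w 5) (w 8) := dperp_pos_of_mem_interior₂ (w 2) (w 5) (w 8) hT258 hI258
  have hd67 : 0 < dperp (w 6) (w 7) := dperp_pos_of_mem_interior (w 6) (w 7) (w 8) hT678 hI678
  -- sign facts for the lifted 4-point determinants, from the chain inequalities
  have hz'0 : zC69 w h 0 5 8 - zC69 w h 0 3 8 = ((dperp (w 0) (w 5) * h 8 + dperp (w 8) (w 0) * h 5 + dperp (w 5) (w 8) * h 0) * tdet (w 0) (w 3) (w 8) - tdet (w 0) (w 5) (w 8) * (dperp (w 0) (w 3) * h 8 + dperp (w 8) (w 0) * h 3 + dperp (w 3) (w 8) * h 0)) / (tdet (w 0) (w 5) (w 8) * tdet (w 0) (w 3) (w 8)) := by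
    simp only [zC69, iheight]
    exact div_sub_div _ _ (ne_of_gt hT058) (ne_of_gt hT038)
  have hden0 : (0:ℝ) < (tdet (w 0) (w 5) (w 8) * tdet (w 0) (w 3) (w 8)) := mul_pos hT058 hT038
  have hQ0 : 0 < ((dperp (w 0) (w 5) * h 8 + dperp (w 8) (w 0) * h 5 + dperp (w 5) (w 8) * h 0) * tdet (w 0) (w 3) (w 8) - tdet (w 0) (w 5) (w 8) * (dperp (w 0) (w 3) * h 8 + dperp (w 8) (w 0) * h 3 + dperp (w 3) (w 8) * h 0)) := by
    have hq : 0 < ((dperp (w 0) (w 5) * h 8 + dperp (w 8) (w 0) * h 5 + dperp (w 5) (w 8) * h 0) * tdet (w 0) (w 3) (w 8) - tdet (w 0) (w 5) (w 8) * (dperp (w 0) (w 3) * h 8 + dperp (w 8) (w 0) * h 3 + dperp (w 3) (w 8) * h 0)) / (tdet (w 0) (w 5) (w 8) * tdet (w 0) (w 3) (w 8)) := by rw [← hz'0]; exact sub_pos.mpr hz0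
    have h2 := mul_pos hq hden0
    rwa [div_mul_cancel₀ _ (ne_of_gt hden0)] at h2
  have hE0 : ((dperp (w 0) (w 5) * h 8 + dperp (w 8) (w 0) * h 5 + dperp (w 5) (w 8) * h 0) * tdet (w 0) (w 3) (w 8) - tdet (w 0) (w 5) (w 8) * (dperp (w 0) (w 3) * h 8 + dperp (w 8) (w 0) * h 3 + dperp (w 3) (w 8) * h 0)) = -(dperp (w 0) (w 8) * (tdet (w 3) (w 5) (w 8) * h 0 - tdet (w 0) (w 5) (w 8) * h 3 + tdet (w 0) (w 3) (w 8) * h 5 - tdet (w 0) (w 3) (w 5) * h 8)) := by simp only [tdet, dperp]; ring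
  rw [hE0] at hQ0
  have hQn0 : dperp (w 0) (w 8) * (tdet (w 3) (w 5) (w 8) * h 0 - tdet (w 0) (w 5) (w 8) * h 3 + tdet (w 0) (w 3) (w 8) * h 5 - tdet (w 0) (w 3) (w 5) * h 8) < 0 := by linarith
  have hD0358 : 0 < (tdet (w 3) (w 5) (w 8) * h 0 - tdet (w 0) (w 5) (w 8) * h 3 + tdet (w 0) (w 3) (w 8) * h 5 - tdet (w 0) (w 3) (w 5) * h 8) := pos_of_neg_mul hd08 hQn0
  have hz'1 : zC69 w h 2 5 8 - zC69 w h 0 5 8 = ((dperp (w 2) (w 5) * h 8 + dperp (w 8) (w 2) * h 5 + dperp (w 5) (w 8) * h 2) * tdet (w 0) (w 5) (w 8) - tdet (w 2) (w 5) (w 8) * (dperp (w 0) (w 5) * h 8 + dperp (w 8) (w 0) * h 5 + dperp (w 5) (w 8) * h 0)) / (tdet (w 2) (w 5) (w 8) * tdet (w 0) (w 5) (w 8)) := by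
    simp only [zC69, iheight]
    exact div_sub_div _ _ (ne_of_gt hT258) (ne_of_gt hT058)
  have hden1 : (0:ℝ) < (tdet (w 2) (w 5) (w 8) * tdet (w 0) (w 5) (w 8)) := mul_pos hT258 hT058
  have hQ1 : 0 < ((dperp (w 2) (w 5) * h 8 + dperp (w 8) (w 2) * h 5 + dperp (w 5) (w 8) * h 2) * tdet (w 0) (w 5) (w 8) - tdet (w 2) (w 5) (w 8) * (dperp (w 0) (w 5) * h 8 + dperp (w 8) (w 0) * h 5 + dperp (w 5) (w 8) * h 0)) := by
    have hq : 0 < ((dperp (w 2) (w 5) * h 8 + dperp (w 8) (w 2) * h 5 + dperp (w 5) (w 8) * h 2) * tdet (w 0) (w 5) (w 8) - tdet (w 2) (w 5) (w 8) * (dperp (w 0) (w 5) * h 8 + dperp (w 8) (w 0) * h 5 + dperp (w 5) (w 8) * h 0)) / (tdet (w 2) (w 5) (w 8) * tdet (w 0) (w 5) (w 8)) := by rw [← hz'1]; exact sub_pos.mpr hz1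
    have h2 := mul_pos hq hden1
    rwa [div_mul_cancel₀ _ (ne_of_gt hden1)] at h2
  have hE1 : ((dperp (w 2) (w 5) * h 8 + dperp (w 8) (w 2) * h 5 + dperp (w 5) (w 8) * h 2) * tdet (w 0) (w 5) (w 8) - tdet (w 2) (w 5) (w 8) * (dperp (w 0) (w 5) * h 8 + dperp (w 8) (w 0) * h 5 + dperp (w 5) (w 8) * h 0)) = -(dperp (w 5) (w 8) * (tdet (w 2) (w 5) (w 8) * h 0 - tdet (w 0) (w 5) (w 8) * h 2 + tdet (w 0) (w 2) (w 8) * h 5 - tdet (w 0) (w 2) (w 5) * h 8)) := by simp only [tdet, dperp]; ring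
  rw [hE1] at hQ1
  have hQn1 : dperp (w 5) (w 8) * (tdet (w 2) (w 5) (w 8) * h 0 - tdet (w 0) (w 5) (w 8) * h 2 + tdet (w 0) (w 2) (w 8) * h 5 - tdet (w 0) (w 2) (w 5) * h 8) < 0 := by linarith
  have hD0258 : (tdet (w 2) (w 5) (w 8) * h 0 - tdet (w 0) (w 5) (w 8) * h 2 + tdet (w 0) (w 2) (w 8) * h 5 - tdet (w 0) (w 2) (w 5) * h 8) < 0 := neg_of_pos_mul hd58 hQn1
  have hz'2 : zC69 w h 1 2 5 - zC69 w h 2 5 8 = ((dperp (w 1) (w 2) * h 5 + dperp (w 5) (w 1) * h 2 + dperp (w 2) (w 5) * h 1) * tdet (w 2) (w 5) (w 8) - tdet (w 1) (w 2) (w 5) * (dperp (w 2) (w 5) * h 8 + dperp (w 8) (w 2) * h 5 + dperp (w 5) (w 8) * h 2)) / (tdet (w 1) (w 2) (w 5) * tdet (w 2) (w 5) (w 8)) := by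
    simp only [zC69, iheight]
    exact div_sub_div _ _ (ne_of_gt hT125) (ne_of_gt hT258)
  have hden2 : (0:ℝ) < (tdet (w 1) (w 2) (w 5) * tdet (w 2) (w 5) (w 8)) := mul_pos hT125 hT258
  have hQ2 : 0 < ((dperp (w 1) (w 2) * h 5 + dperp (w 5) (w 1) * h 2 + dperp (w 2) (w 5) * h 1) * tdet (w 2) (w 5) (w 8) - tdet (w 1) (w 2) (w 5) * (dperp (w 2) (w 5) * h 8 + dperp (w 8) (w 2) * h 5 + dperp (w 5) (w 8) * h 2)) := by
    have hq : 0 < ((dperp (w 1) (w 2) * h 5 + dperp (w 5) (w 1) * h 2 + dperp (w 2) (w 5) * h 1) * tdet (w 2) (w 5) (w 8) - tdet (w 1) (w 2) (w 5) * (dperp (w 2) (w 5) * h 8 + dperp (w 8) (w 2) * h 5 + dperp (w 5) (w 8) * h 2)) / (tdet (w 1) (w 2) (w 5) * tdet (w 2) (w 5) (w 8)) := by rw [← hz'2]; exact sub_pos.mpr hz2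
    have h2 := mul_pos hq hden2
    rwa [div_mul_cancel₀ _ (ne_of_gt hden2)] at h2
  have hE2 : ((dperp (w 1) (w 2) * h 5 + dperp (w 5) (w 1) * h 2 + dperp (w 2) (w 5) * h 1) * tdet (w 2) (w 5) (w 8) - tdet (w 1) (w 2) (w 5) * (dperp (w 2) (w 5) * h 8 + dperp (w 8) (w 2) * h 5 + dperp (w 5) (w 8) * h 2)) = dperp (w 2) (w 5) * (tdet (w 2) (w 5) (w 8) * h 1 - tdet (w 1) (w 5) (w 8) * h 2 + tdet (w 1) (w 2) (w 8) * h 5 - tdet (w 1) (w 2) (w 5) * h 8) := by simp only [tdet, dperp]; ring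
  rw [hE2] at hQ2
  have hD1258 : 0 < (tdet (w 2) (w 5) (w 8) * h 1 - tdet (w 1) (w 5) (w 8) * h 2 + tdet (w 1) (w 2) (w 8) * h 5 - tdet (w 1) (w 2) (w 5) * h 8) := pos_of_pos_mul hd25 hQ2
  have hz'3 : zC69 w h 2 5 6 - zC69 w h 1 2 5 = ((dperp (w 2) (w 5) * h 6 + dperp (w 6) (w 2) * h 5 + dperp (w 5) (w 6) * h 2) * tdet (w 1) (w 2) (w 5) - tdet (w 2) (w 5) (w 6) * (dperp (w 1) (w 2) * h 5 + dperp (w 5) (w 1) * h 2 + dperp (w 2) (w 5) * h 1)) / (tdet (w 2) (w 5) (w 6) * tdet (w 1) (w 2) (w 5)) := by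
    simp only [zC69, iheight]
    exact div_sub_div _ _ (ne_of_gt hT256) (ne_of_gt hT125)
  have hden3 : (0:ℝ) < (tdet (w 2) (w 5) (w 6) * tdet (w 1) (w 2) (w 5)) := mul_pos hT256 hT125
  have hQ3 : 0 < ((dperp (w 2) (w 5) * h 6 + dperp (w 6) (w 2) * h 5 + dperp (w 5) (w 6) * h 2) * tdet (w 1) (w 2) (w 5) - tdet (w 2) (w 5) (w 6) * (dperp (w 1) (w 2) * h 5 + dperp (w 5) (w 1) * h 2 + dperp (w 2) (w 5) * h 1)) := by
    have hq : 0 < ((dperp (w 2) (w 5) * h 6 + dperp (w 6) (w 2) * h 5 + dperp (w 5) (w 6) * h 2) * tdet (w 1) (w 2) (w 5) - tdet (w 2) (w 5) (w 6) * (dperp (w 1) (w 2) * h 5 + dperp (w 5) (w 1) * h 2 + dperp (w 2) (w 5) * h 1)) / (tdet (w 2) (w 5) (w 6) * tdet (w 1) (w 2) (w 5)) := by rw [← hz'3]; exact sub_pos.mpr hz3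
    have h2 := mul_pos hq hden3
    rwa [div_mul_cancel₀ _ (ne_of_gt hden3)] at h2
  have hE3 : ((dperp (w 2) (w 5) * h 6 + dperp (w 6) (w 2) * h 5 + dperp (w 5) (w 6) * h 2) * tdet (w 1) (w 2) (w 5) - tdet (w 2) (w 5) (w 6) * (dperp (w 1) (w 2) * h 5 + dperp (w 5) (w 1) * h 2 + dperp (w 2) (w 5) * h 1)) = -(dperp (w 2) (w 5) * (tdet (w 2) (w 5) (w 6) * h 1 - tdet (w 1) (w 5) (w 6) * h 2 + tdet (w 1) (w 2) (w 6) * h 5 - tdet (w 1) (w 2) (w 5) * h 6)) := by simp only [tdet, dperp]; ring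
  rw [hE3] at hQ3
  have hQn3 : dperp (w 2) (w 5) * (tdet (w 2) (w 5) (w 6) * h 1 - tdet (w 1) (w 5) (w 6) * h 2 + tdet (w 1) (w 2) (w 6) * h 5 - tdet (w 1) (w 2) (w 5) * h 6) < 0 := by linarith
  have hD1256 : (tdet (w 2) (w 5) (w 6) * h 1 - tdet (w 1) (w 5) (w 6) * h 2 + tdet (w 1) (w 2) (w 6) * h 5 - tdet (w 1) (w 2) (w 5) * h 6) < 0 := neg_of_pos_mul hd25 hQn3
  have hz'4 : zC69 w h 0 5 6 - zC69 w h 2 5 6 = ((dperp (w 0) (w 5) * h 6 + dperp (w 6) (w 0) * h 5 + dperp (w 5) (w 6) * h 0) * tdet (w 2) (w 5) (w 6) - tdet (w 0) (w 5) (w 6) * (dperp (w 2) (w 5) * h 6 + dperp (w 6) (w 2) * h 5 + dperp (w 5) (w 6) * h 2)) / (tdet (w 0) (w 5) (w 6) * tdet (w 2) (w 5) (w 6)) := by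
    simp only [zC69, iheight]
    exact div_sub_div _ _ (ne_of_gt hT056) (ne_of_gt hT256)
  have hden4 : (0:ℝ) < (tdet (w 0) (w 5) (w 6) * tdet (w 2) (w 5) (w 6)) := mul_pos hT056 hT256
  have hQ4 : 0 < ((dperp (w 0) (w 5) * h 6 + dperp (w 6) (w 0) * h 5 + dperp (w 5) (w 6) * h 0) * tdet (w 2) (w 5) (w 6) - tdet (w 0) (w 5) (w 6) * (dperp (w 2) (w 5) * h 6 + dperp (w 6) (w 2) * h 5 + dperp (w 5) (w 6) * h 2)) := by
    have hq : 0 < ((dperp (w 0) (w 5) * h 6 + dperp (w 6) (w 0) * h 5 + dperp (w 5) (w 6) * h 0) * tdet (w 2) (w 5) (w 6) - tdet (w 0) (w 5) (w 6) * (dperp (w 2) (w 5) * h 6 + dperp (w 6) (w 2) * h 5 + dperp (w 5) (w 6) * h 2)) / (tdet (w 0) (w 5) (w 6) * tdet (w 2) (w 5) (w 6)) := by rw [← hz'4]; exact sub_pos.mpr hz4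
    have h2 := mul_pos hq hden4
    rwa [div_mul_cancel₀ _ (ne_of_gt hden4)] at h2
  have hE4 : ((dperp (w 0) (w 5) * h 6 + dperp (w 6) (w 0) * h 5 + dperp (w 5) (w 6) * h 0) * tdet (w 2) (w 5) (w 6) - tdet (w 0) (w 5) (w 6) * (dperp (w 2) (w 5) * h 6 + dperp (w 6) (w 2) * h 5 + dperp (w 5) (w 6) * h 2)) = dperp (w 5) (w 6) * (tdet (w 2) (w 5) (w 6) * h 0 - tdet (w 0) (w 5) (w 6) * h 2 + tdet (w 0) (w 2) (w 6) * h 5 - tdet (w 0) (w 2) (w 5) * h 6) := by simp only [tdet, dperp]; ring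
  rw [hE4] at hQ4
  have hD0256 : 0 < (tdet (w 2) (w 5) (w 6) * h 0 - tdet (w 0) (w 5) (w 6) * h 2 + tdet (w 0) (w 2) (w 6) * h 5 - tdet (w 0) (w 2) (w 5) * h 6) := pos_of_pos_mul hd56 hQ4
  have hz'5 : zC69 w h 4 5 6 - zC69 w h 0 5 6 = ((dperp (w 4) (w 5) * h 6 + dperp (w 6) (w 4) * h 5 + dperp (w 5) (w 6) * h 4) * tdet (w 0) (w 5) (w 6) - tdet (w 4) (w 5) (w 6) * (dperp (w 0) (w 5) * h 6 + dperp (w 6) (w 0) * h 5 + dperp (w 5) (w 6) * h 0)) / (tdet (w 4) (w 5) (w 6) * tdet (w 0) (w 5) (w 6)) := by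
    simp only [zC69, iheight]
    exact div_sub_div _ _ (ne_of_gt hT456) (ne_of_gt hT056)
  have hden5 : (0:ℝ) < (tdet (w 4) (w 5) (w 6) * tdet (w 0) (w 5) (w 6)) := mul_pos hT456 hT056
  have hQ5 : 0 < ((dperp (w 4) (w 5) * h 6 + dperp (w 6) (w 4) * h 5 + dperp (w 5) (w 6) * h 4) * tdet (w 0) (w 5) (w 6) - tdet (w 4) (w 5) (w 6) * (dperp (w 0) (w 5) * h 6 + dperp (w 6) (w 0) * h 5 + dperp (w 5) (w 6) * h 0)) := by
    have hq : 0 < ((dperp (w 4) (w 5) * h 6 + dperp (w 6) (w 4) * h 5 + dperp (w 5) (w 6) * h 4) * tdet (w 0) (w 5) (w 6) - tdet (w 4) (w 5) (w 6) * (dperp (w 0) (w 5) * h 6 + dperp (w 6) (w 0) * h 5 + dperp (w 5) (w 6) * h 0)) / (tdet (w 4) (w 5) (w 6) * tdet (w 0) (w 5) (w 6)) := by rw [← hz'5]; exact sub_pos.mpr hz5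
    have h2 := mul_pos hq hden5
    rwa [div_mul_cancel₀ _ (ne_of_gt hden5)] at h2
  have hE5 : ((dperp (w 4) (w 5) * h 6 + dperp (w 6) (w 4) * h 5 + dperp (w 5) (w 6) * h 4) * tdet (w 0) (w 5) (w 6) - tdet (w 4) (w 5) (w 6) * (dperp (w 0) (w 5) * h 6 + dperp (w 6) (w 0) * h 5 + dperp (w 5) (w 6) * h 0)) = -(dperp (w 5) (w 6) * (tdet (w 4) (w 5) (w 6) * h 0 - tdet (w 0) (w 5) (w 6) * h 4 + tdet (w 0) (w 4) (w 6) * h 5 - tdet (w 0) (w 4) (w 5) * h 6)) := by simp only [tdet, dperp]; ring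
  rw [hE5] at hQ5
  have hQn5 : dperp (w 5) (w 6) * (tdet (w 4) (w 5) (w 6) * h 0 - tdet (w 0) (w 5) (w 6) * h 4 + tdet (w 0) (w 4) (w 6) * h 5 - tdet (w 0) (w 4) (w 5) * h 6) < 0 := by linarith
  have hD0456 : (tdet (w 4) (w 5) (w 6) * h 0 - tdet (w 0) (w 5) (w 6) * h 4 + tdet (w 0) (w 4) (w 6) * h 5 - tdet (w 0) (w 4) (w 5) * h 6) < 0 := neg_of_pos_mul hd56 hQn5
  have hz'6 : zC69 w h 4 5 8 - zC69 w h 4 5 6 = ((dperp (w 4) (w 5) * h 8 + dperp (w 8) (w 4) * h 5 + dperp (w 5) (w 8) * h 4) * tdet (w 4) (w 5) (w 6) - tdet (w 4) (w 5) (w 8) * (dperp (w 4) (w 5) * h 6 + dperp (w 6) (w 4) * h 5 + dperp (w 5) (w 6) * h 4)) / (tdet (w 4) (w 5) (w 8) * tdet (w 4) (w 5) (w 6)) := by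
    simp only [zC69, iheight]
    exact div_sub_div _ _ (ne_of_gt hT458) (ne_of_gt hT456)
  have hden6 : (0:ℝ) < (tdet (w 4) (w 5) (w 8) * tdet (w 4) (w 5) (w 6)) := mul_pos hT458 hT456
  have hQ6 : 0 < ((dperp (w 4) (w 5) * h 8 + dperp (w 8) (w 4) * h 5 + dperp (w 5) (w 8) * h 4) * tdet (w 4) (w 5) (w 6) - tdet (w 4) (w 5) (w 8) * (dperp (w 4) (w 5) * h 6 + dperp (w 6) (w 4) * h 5 + dperp (w 5) (w 6) * h 4)) := by
    have hq : 0 < ((dperp (w 4) (w 5) * h 8 + dperp (w 8) (w 4) * h 5 + dperp (w 5) (w 8) * h 4) * tdet (w 4) (w 5) (w 6) - tdet (w 4) (w 5) (w 8) * (dperp (w 4) (w 5) * h 6 + dperp (w 6) (w 4) * h 5 + dperp (w 5) (w 6) * h 4)) / (tdet (w 4) (w 5) (w 8) * tdet (w 4) (w 5) (w 6)) := by rw [← hz'6]; exact sub_pos.mpr hz6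
    have h2 := mul_pos hq hden6
    rwa [div_mul_cancel₀ _ (ne_of_gt hden6)] at h2
  have hE6 : ((dperp (w 4) (w 5) * h 8 + dperp (w 8) (w 4) * h 5 + dperp (w 5) (w 8) * h 4) * tdet (w 4) (w 5) (w 6) - tdet (w 4) (w 5) (w 8) * (dperp (w 4) (w 5) * h 6 + dperp (w 6) (w 4) * h 5 + dperp (w 5) (w 6) * h 4)) = -(dperp (w 4) (w 5) * (tdet (w 5) (w 6) (w 8) * h 4 - tdet (w 4) (w 6) (w 8) * h 5 + tdet (w 4) (w 5) (w 8) * h 6 - tdet (w 4) (w 5) (w 6) * h 8)) := by simp only [tdet, dperp]; ring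
  rw [hE6] at hQ6
  have hQn6 : dperp (w 4) (w 5) * (tdet (w 5) (w 6) (w 8) * h 4 - tdet (w 4) (w 6) (w 8) * h 5 + tdet (w 4) (w 5) (w 8) * h 6 - tdet (w 4) (w 5) (w 6) * h 8) < 0 := by linarith
  have hD4568 : (tdet (w 5) (w 6) (w 8) * h 4 - tdet (w 4) (w 6) (w 8) * h 5 + tdet (w 4) (w 5) (w 8) * h 6 - tdet (w 4) (w 5) (w 6) * h 8) < 0 := neg_of_pos_mul hd45 hQn6
  have hz'7 : zC69 w h 1 4 5 - zC69 w h 4 5 8 = ((dperp (w 1) (w 4) * h 5 + dperp (w 5) (w 1) * h 4 + dperp (w 4) (w 5) * h 1) * tdet (w 4) (w 5) (w 8) - tdet (w 1) (w 4) (w 5) * (dperp (w 4) (w 5) * h 8 + dperp (w 8) (w 4) * h 5 + dperp (w 5) (w 8) * h 4)) / (tdet (w 1) (w 4) (w 5) * tdet (w 4) (w 5) (w 8)) := by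
    simp only [zC69, iheight]
    exact div_sub_div _ _ (ne_of_gt hT145) (ne_of_gt hT458)
  have hden7 : (0:ℝ) < (tdet (w 1) (w 4) (w 5) * tdet (w 4) (w 5) (w 8)) := mul_pos hT145 hT458
  have hQ7 : 0 < ((dperp (w 1) (w 4) * h 5 + dperp (w 5) (w 1) * h 4 + dperp (w 4) (w 5) * h 1) * tdet (w 4) (w 5) (w 8) - tdet (w 1) (w 4) (w 5) * (dperp (w 4) (w 5) * h 8 + dperp (w 8) (w 4) * h 5 + dperp (w 5) (w 8) * h 4)) := by
    have hq : 0 < ((dperp (w 1) (w 4) * h 5 + dperp (w 5) (w 1) * h 4 + dperp (w 4) (w 5) * h 1) * tdet (w 4) (w 5) (w 8) - tdet (w 1) (w 4) (w 5) * (dperp (w 4) (w 5) * h 8 + dperp (w 8) (w 4) * h 5 + dperp (w 5) (w 8) * h 4)) / (tdet (w 1) (w 4) (w 5) * tdet (w 4) (w 5) (w 8)) := by rw [← hz'7]; exact sub_pos.mpr hz7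
    have h2 := mul_pos hq hden7
    rwa [div_mul_cancel₀ _ (ne_of_gt hden7)] at h2
  have hE7 : ((dperp (w 1) (w 4) * h 5 + dperp (w 5) (w 1) * h 4 + dperp (w 4) (w 5) * h 1) * tdet (w 4) (w 5) (w 8) - tdet (w 1) (w 4) (w 5) * (dperp (w 4) (w 5) * h 8 + dperp (w 8) (w 4) * h 5 + dperp (w 5) (w 8) * h 4)) = dperp (w 4) (w 5) * (tdet (w 4) (w 5) (w 8) * h 1 - tdet (w 1) (w 5) (w 8) * h 4 + tdet (w 1) (w 4) (w 8) * h 5 - tdet (w 1) (w 4) (w 5) * h 8) := by simp only [tdet, dperp]; ring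
  rw [hE7] at hQ7
  have hD1458 : 0 < (tdet (w 4) (w 5) (w 8) * h 1 - tdet (w 1) (w 5) (w 8) * h 4 + tdet (w 1) (w 4) (w 8) * h 5 - tdet (w 1) (w 4) (w 5) * h 8) := pos_of_pos_mul hd45 hQ7
  have hz'8 : zC69 w h 3 4 5 - zC69 w h 1 4 5 = ((dperp (w 3) (w 4) * h 5 + dperp (w 5) (w 3) * h 4 + dperp (w 4) (w 5) * h 3) * tdet (w 1) (w 4) (w 5) - tdet (w 3) (w 4) (w 5) * (dperp (w 1) (w 4) * h 5 + dperp (w 5) (w 1) * h 4 + dperp (w 4) (w 5) * h 1)) / (tdet (w 3) (w 4) (w 5) * tdet (w 1) (w 4) (w 5)) := by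
    simp only [zC69, iheight]
    exact div_sub_div _ _ (ne_of_gt hT345) (ne_of_gt hT145)
  have hden8 : (0:ℝ) < (tdet (w 3) (w 4) (w 5) * tdet (w 1) (w 4) (w 5)) := mul_pos hT345 hT145
  have hQ8 : 0 < ((dperp (w 3) (w 4) * h 5 + dperp (w 5) (w 3) * h 4 + dperp (w 4) (w 5) * h 3) * tdet (w 1) (w 4) (w 5) - tdet (w 3) (w 4) (w 5) * (dperp (w 1) (w 4) * h 5 + dperp (w 5) (w 1) * h 4 + dperp (w 4) (w 5) * h 1)) := by
    have hq : 0 < ((dperp (w 3) (w 4) * h 5 + dperp (w 5) (w 3) * h 4 + dperp (w 4) (w 5) * h 3) * tdet (w 1) (w 4) (w 5) - tdet (w 3) (w 4) (w 5) * (dperp (w 1) (w 4) * h 5 + dperp (w 5) (w 1) * h 4 + dperp (w 4) (w 5) * h 1)) / (tdet (w 3) (w 4) (w 5) * tdet (w 1) (w 4) (w 5)) := by rw [← hz'8]; exact sub_pos.mpr hz8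
    have h2 := mul_pos hq hden8
    rwa [div_mul_cancel₀ _ (ne_of_gt hden8)] at h2
  have hE8 : ((dperp (w 3) (w 4) * h 5 + dperp (w 5) (w 3) * h 4 + dperp (w 4) (w 5) * h 3) * tdet (w 1) (w 4) (w 5) - tdet (w 3) (w 4) (w 5) * (dperp (w 1) (w 4) * h 5 + dperp (w 5) (w 1) * h 4 + dperp (w 4) (w 5) * h 1)) = -(dperp (w 4) (w 5) * (tdet (w 3) (w 4) (w 5) * h 1 - tdet (w 1) (w 4) (w 5) * h 3 + tdet (w 1) (w 3) (w 5) * h 4 - tdet (w 1) (w 3) (w 4) * h 5)) := by simp only [tdet, dperp]; ring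
  rw [hE8] at hQ8
  have hQn8 : dperp (w 4) (w 5) * (tdet (w 3) (w 4) (w 5) * h 1 - tdet (w 1) (w 4) (w 5) * h 3 + tdet (w 1) (w 3) (w 5) * h 4 - tdet (w 1) (w 3) (w 4) * h 5) < 0 := by linarith
  have hD1345 : (tdet (w 3) (w 4) (w 5) * h 1 - tdet (w 1) (w 4) (w 5) * h 3 + tdet (w 1) (w 3) (w 5) * h 4 - tdet (w 1) (w 3) (w 4) * h 5) < 0 := neg_of_pos_mul hd45 hQn8
  have hz'9 : zC69 w h 0 3 4 - zC69 w h 3 4 5 = ((dperp (w 0) (w 3) * h 4 + dperp (w 4) (w 0) * h 3 + dperp (w 3) (w 4) * h 0) * tdet (w 3) (w 4) (w 5) - tdet (w 0) (w 3) (w 4) * (dperp (w 3) (w 4) * h 5 + dperp (w 5) (w 3) * h 4 + dperp (w 4) (w 5) * h 3)) / (tdet (w 0) (w 3) (w 4) * tdet (w 3) (w 4) (w 5)) := by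
    simp only [zC69, iheight]
    exact div_sub_div _ _ (ne_of_gt hT034) (ne_of_gt hT345)
  have hden9 : (0:ℝ) < (tdet (w 0) (w 3) (w 4) * tdet (w 3) (w 4) (w 5)) := mul_pos hT034 hT345
  have hQ9 : 0 < ((dperp (w 0) (w 3) * h 4 + dperp (w 4) (w 0) * h 3 + dperp (w 3) (w 4) * h 0) * tdet (w 3) (w 4) (w 5) - tdet (w 0) (w 3) (w 4) * (dperp (w 3) (w 4) * h 5 + dperp (w 5) (w 3) * h 4 + dperp (w 4) (w 5) * h 3)) := by
    have hq : 0 < ((dperp (w 0) (w 3) * h 4 + dperp (w 4) (w 0) * h 3 + dperp (w 3) (w 4) * h 0) * tdet (w 3) (w 4) (w 5) - tdet (w 0) (w 3) (w 4) * (dperp (w 3) (w 4) * h 5 + dperp (w 5) (w 3) * h 4 + dperp (w 4) (w 5) * h 3)) / (tdet (w 0) (w 3) (w 4) * tdet (w 3) (w 4) (w 5)) := by rw [← hz'9]; exact sub_pos.mpr hz9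
    have h2 := mul_pos hq hden9
    rwa [div_mul_cancel₀ _ (ne_of_gt hden9)] at h2
  have hE9 : ((dperp (w 0) (w 3) * h 4 + dperp (w 4) (w 0) * h 3 + dperp (w 3) (w 4) * h 0) * tdet (w 3) (w 4) (w 5) - tdet (w 0) (w 3) (w 4) * (dperp (w 3) (w 4) * h 5 + dperp (w 5) (w 3) * h 4 + dperp (w 4) (w 5) * h 3)) = dperp (w 3) (w 4) * (tdet (w 3) (w 4) (w 5) * h 0 - tdet (w 0) (w 4) (w 5) * h 3 + tdet (w 0) (w 3) (w 5) * h 4 - tdet (w 0) (w 3) (w 4) * h 5) := by simp only [tdet, dperp]; ring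
  rw [hE9] at hQ9
  have hD0345 : 0 < (tdet (w 3) (w 4) (w 5) * h 0 - tdet (w 0) (w 4) (w 5) * h 3 + tdet (w 0) (w 3) (w 5) * h 4 - tdet (w 0) (w 3) (w 4) * h 5) := pos_of_pos_mul hd34 hQ9
  have hz'16 : zC69 w h 0 1 6 - zC69 w h 0 1 2 = ((dperp (w 0) (w 1) * h 6 + dperp (w 6) (w 0) * h 1 + dperp (w 1) (w 6) * h 0) * tdet (w 0) (w 1) (w 2) - tdet (w 0) (w 1) (w 6) * (dperp (w 0) (w 1) * h 2 + dperp (w 2) (w 0) * h 1 + dperp (w 1) (w 2) * h 0)) / (tdet (w 0) (w 1) (w 6) * tdet (w 0) (w 1) (w 2)) := by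
    simp only [zC69, iheight]
    exact div_sub_div _ _ (ne_of_gt hT016) (ne_of_gt hT012)
  have hden16 : (0:ℝ) < (tdet (w 0) (w 1) (w 6) * tdet (w 0) (w 1) (w 2)) := mul_pos hT016 hT012
  have hQ16 : 0 < ((dperp (w 0) (w 1) * h 6 + dperp (w 6) (w 0) * h 1 + dperp (w 1) (w 6) * h 0) * tdet (w 0) (w 1) (w 2) - tdet (w 0) (w 1) (w 6) * (dperp (w 0) (w 1) * h 2 + dperp (w 2) (w 0) * h 1 + dperp (w 1) (w 2) * h 0)) := by
    have hq : 0 < ((dperp (w 0) (w 1) * h 6 + dperp (w 6) (w 0) * h 1 + dperp (w 1) (w 6) * h 0) * tdet (w 0) (w 1) (w 2) - tdet (w 0) (w 1) (w 6) * (dperp (w 0) (w 1) * h 2 + dperp (w 2) (w 0) * h 1 + dperp (w 1) (w 2) * h 0)) / (tdet (w 0) (w 1) (w 6) * tdet (w 0) (w 1) (w 2)) := by rw [← hz'16]; exact sub_pos.mpr hz16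
    have h2 := mul_pos hq hden16
    rwa [div_mul_cancel₀ _ (ne_of_gt hden16)] at h2
  have hE16 : ((dperp (w 0) (w 1) * h 6 + dperp (w 6) (w 0) * h 1 + dperp (w 1) (w 6) * h 0) * tdet (w 0) (w 1) (w 2) - tdet (w 0) (w 1) (w 6) * (dperp (w 0) (w 1) * h 2 + dperp (w 2) (w 0) * h 1 + dperp (w 1) (w 2) * h 0)) = -(dperp (w 0) (w 1) * (tdet (w 1) (w 2) (w 6) * h 0 - tdet (w 0) (w 2) (w 6) * h 1 + tdet (w 0) (w 1) (w 6) * h 2 - tdet (w 0) (w 1) (w 2) * h 6)) := by simp only [tdet, dperp]; ring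
  rw [hE16] at hQ16
  have hQn16 : dperp (w 0) (w 1) * (tdet (w 1) (w 2) (w 6) * h 0 - tdet (w 0) (w 2) (w 6) * h 1 + tdet (w 0) (w 1) (w 6) * h 2 - tdet (w 0) (w 1) (w 2) * h 6) < 0 := by linarith
  have hD0126 : (tdet (w 1) (w 2) (w 6) * h 0 - tdet (w 0) (w 2) (w 6) * h 1 + tdet (w 0) (w 1) (w 6) * h 2 - tdet (w 0) (w 1) (w 2) * h 6) < 0 := neg_of_pos_mul hd01 hQn16
  have hz'17 : zC69 w h 0 3 6 - zC69 w h 0 1 6 = ((dperp (w 0) (w 3) * h 6 + dperp (w 6) (w 0) * h 3 + dperp (w 3) (w 6) * h 0) * tdet (w 0) (w 1) (w 6) - tdet (w 0) (w 3) (w 6) * (dperp (w 0) (w 1) * h 6 + dperp (w 6) (w 0) * h 1 + dperp (w 1) (w 6) * h 0)) / (tdet (w 0) (w 3) (w 6) * tdet (w 0) (w 1) (w 6)) := by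
    simp only [zC69, iheight]
    exact div_sub_div _ _ (ne_of_gt hT036) (ne_of_gt hT016)
  have hden17 : (0:ℝ) < (tdet (w 0) (w 3) (w 6) * tdet (w 0) (w 1) (w 6)) := mul_pos hT036 hT016
  have hQ17 : 0 < ((dperp (w 0) (w 3) * h 6 + dperp (w 6) (w 0) * h 3 + dperp (w 3) (w 6) * h 0) * tdet (w 0) (w 1) (w 6) - tdet (w 0) (w 3) (w 6) * (dperp (w 0) (w 1) * h 6 + dperp (w 6) (w 0) * h 1 + dperp (w 1) (w 6) * h 0)) := by
    have hq : 0 < ((dperp (w 0) (w 3) * h 6 + dperp (w 6) (w 0) * h 3 + dperp (w 3) (w 6) * h 0) * tdet (w 0) (w 1) (w 6) - tdet (w 0) (w 3) (w 6) * (dperp (w 0) (w 1) * h 6 + dperp (w 6) (w 0) * h 1 + dperp (w 1) (w 6) * h 0)) / (tdet (w 0) (w 3) (w 6) * tdet (w 0) (w 1) (w 6)) := by rw [← hz'17]; exact sub_pos.mpr hz17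
    have h2 := mul_pos hq hden17
    rwa [div_mul_cancel₀ _ (ne_of_gt hden17)] at h2
  have hE17 : ((dperp (w 0) (w 3) * h 6 + dperp (w 6) (w 0) * h 3 + dperp (w 3) (w 6) * h 0) * tdet (w 0) (w 1) (w 6) - tdet (w 0) (w 3) (w 6) * (dperp (w 0) (w 1) * h 6 + dperp (w 6) (w 0) * h 1 + dperp (w 1) (w 6) * h 0)) = -(dperp (w 0) (w 6) * (tdet (w 1) (w 3) (w 6) * h 0 - tdet (w 0) (w 3) (w 6) * h 1 + tdet (w 0) (w 1) (w 6) * h 3 - tdet (w 0) (w 1) (w 3) * h 6)) := by simp only [tdet, dperp]; ring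
  rw [hE17] at hQ17
  have hQn17 : dperp (w 0) (w 6) * (tdet (w 1) (w 3) (w 6) * h 0 - tdet (w 0) (w 3) (w 6) * h 1 + tdet (w 0) (w 1) (w 6) * h 3 - tdet (w 0) (w 1) (w 3) * h 6) < 0 := by linarith
  have hD0136 : 0 < (tdet (w 1) (w 3) (w 6) * h 0 - tdet (w 0) (w 3) (w 6) * h 1 + tdet (w 0) (w 1) (w 6) * h 3 - tdet (w 0) (w 1) (w 3) * h 6) := pos_of_neg_mul hd06 hQn17
  have hz'18 : zC69 w h 2 3 6 - zC69 w h 0 3 6 = ((dperp (w 2) (w 3) * h 6 + dperp (w 6) (w 2) * h 3 + dperp (w 3) (w 6) * h 2) * tdet (w 0) (w 3) (w 6) - tdet (w 2) (w 3) (w 6) * (dperp (w 0) (w 3) * h 6 + dperp (w 6) (w 0) * h 3 + dperp (w 3) (w 6) * h 0)) / (tdet (w 2) (w 3) (w 6) * tdet (w 0) (w 3) (w 6)) := by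
    simp only [zC69, iheight]
    exact div_sub_div _ _ (ne_of_gt hT236) (ne_of_gt hT036)
  have hden18 : (0:ℝ) < (tdet (w 2) (w 3) (w 6) * tdet (w 0) (w 3) (w 6)) := mul_pos hT236 hT036
  have hQ18 : 0 < ((dperp (w 2) (w 3) * h 6 + dperp (w 6) (w 2) * h 3 + dperp (w 3) (w 6) * h 2) * tdet (w 0) (w 3) (w 6) - tdet (w 2) (w 3) (w 6) * (dperp (w 0) (w 3) * h 6 + dperp (w 6) (w 0) * h 3 + dperp (w 3) (w 6) * h 0)) := by
    have hq : 0 < ((dperp (w 2) (w 3) * h 6 + dperp (w 6) (w 2) * h 3 + dperp (w 3) (w 6) * h 2) * tdet (w 0) (w 3) (w 6) - tdet (w 2) (w 3) (w 6) * (dperp (w 0) (w 3) * h 6 + dperp (w 6) (w 0) * h 3 + dperp (w 3) (w 6) * h 0)) / (tdet (w 2) (w 3) (w 6) * tdet (w 0) (w 3) (w 6)) := by rw [← hz'18]; exact sub_pos.mpr hz18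
    have h2 := mul_pos hq hden18
    rwa [div_mul_cancel₀ _ (ne_of_gt hden18)] at h2
  have hE18 : ((dperp (w 2) (w 3) * h 6 + dperp (w 6) (w 2) * h 3 + dperp (w 3) (w 6) * h 2) * tdet (w 0) (w 3) (w 6) - tdet (w 2) (w 3) (w 6) * (dperp (w 0) (w 3) * h 6 + dperp (w 6) (w 0) * h 3 + dperp (w 3) (w 6) * h 0)) = -(dperp (w 3) (w 6) * (tdet (w 2) (w 3) (w 6) * h 0 - tdet (w 0) (w 3) (w 6) * h 2 + tdet (w 0) (w 2) (w 6) * h 3 - tdet (w 0) (w 2) (w 3) * h 6)) := by simp only [tdet, dperp]; ring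
  rw [hE18] at hQ18
  have hQn18 : dperp (w 3) (w 6) * (tdet (w 2) (w 3) (w 6) * h 0 - tdet (w 0) (w 3) (w 6) * h 2 + tdet (w 0) (w 2) (w 6) * h 3 - tdet (w 0) (w 2) (w 3) * h 6) < 0 := by linarith
  have hD0236 : (tdet (w 2) (w 3) (w 6) * h 0 - tdet (w 0) (w 3) (w 6) * h 2 + tdet (w 0) (w 2) (w 6) * h 3 - tdet (w 0) (w 2) (w 3) * h 6) < 0 := neg_of_pos_mul hd36 hQn18
  have hz'19 : zC69 w h 3 6 7 - zC69 w h 2 3 6 = ((dperp (w 3) (w 6) * h 7 + dperp (w 7) (w 3) * h 6 + dperp (w 6) (w 7) * h 3) * tdet (w 2) (w 3) (w 6) - tdet (w 3) (w 6) (w 7) * (dperp (w 2) (w 3) * h 6 + dperp (w 6) (w 2) * h 3 + dperp (w 3) (w 6) * h 2)) / (tdet (w 3) (w 6) (w 7) * tdet (w 2) (w 3) (w 6)) := by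
    simp only [zC69, iheight]
    exact div_sub_div _ _ (ne_of_gt hT367) (ne_of_gt hT236)
  have hden19 : (0:ℝ) < (tdet (w 3) (w 6) (w 7) * tdet (w 2) (w 3) (w 6)) := mul_pos hT367 hT236
  have hQ19 : 0 < ((dperp (w 3) (w 6) * h 7 + dperp (w 7) (w 3) * h 6 + dperp (w 6) (w 7) * h 3) * tdet (w 2) (w 3) (w 6) - tdet (w 3) (w 6) (w 7) * (dperp (w 2) (w 3) * h 6 + dperp (w 6) (w 2) * h 3 + dperp (w 3) (w 6) * h 2)) := by
    have hq : 0 < ((dperp (w 3) (w 6) * h 7 + dperp (w 7) (w 3) * h 6 + dperp (w 6) (w 7) * h 3) * tdet (w 2) (w 3) (w 6) - tdet (w 3) (w 6) (w 7) * (dperp (w 2) (w 3) * h 6 + dperp (w 6) (w 2) * h 3 + dperp (w 3) (w 6) * h 2)) / (tdet (w 3) (w 6) (w 7) * tdet (w 2) (w 3) (w 6)) := by rw [← hz'19]; exact sub_pos.mpr hz19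
    have h2 := mul_pos hq hden19
    rwa [div_mul_cancel₀ _ (ne_of_gt hden19)] at h2
  have hE19 : ((dperp (w 3) (w 6) * h 7 + dperp (w 7) (w 3) * h 6 + dperp (w 6) (w 7) * h 3) * tdet (w 2) (w 3) (w 6) - tdet (w 3) (w 6) (w 7) * (dperp (w 2) (w 3) * h 6 + dperp (w 6) (w 2) * h 3 + dperp (w 3) (w 6) * h 2)) = -(dperp (w 3) (w 6) * (tdet (w 3) (w 6) (w 7) * h 2 - tdet (w 2) (w 6) (w 7) * h 3 + tdet (w 2) (w 3) (w 7) * h 6 - tdet (w 2) (w 3) (w 6) * h 7)) := by simp only [tdet, dperp]; ring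
  rw [hE19] at hQ19
  have hQn19 : dperp (w 3) (w 6) * (tdet (w 3) (w 6) (w 7) * h 2 - tdet (w 2) (w 6) (w 7) * h 3 + tdet (w 2) (w 3) (w 7) * h 6 - tdet (w 2) (w 3) (w 6) * h 7) < 0 := by linarith
  have hD2367 : (tdet (w 3) (w 6) (w 7) * h 2 - tdet (w 2) (w 6) (w 7) * h 3 + tdet (w 2) (w 3) (w 7) * h 6 - tdet (w 2) (w 3) (w 6) * h 7) < 0 := neg_of_pos_mul hd36 hQn19
  have hz'20 : zC69 w h 5 6 7 - zC69 w h 3 6 7 = ((dperp (w 5) (w 6) * h 7 + dperp (w 7) (w 5) * h 6 + dperp (w 6) (w 7) * h 5) * tdet (w 3) (w 6) (w 7) - tdet (w 5) (w 6) (w 7) * (dperp (w 3) (w 6) * h 7 + dperp (w 7) (w 3) * h 6 + dperp (w 6) (w 7) * h 3)) / (tdet (w 5) (w 6) (w 7) * tdet (w 3) (w 6) (w 7)) := by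
    simp only [zC69, iheight]
    exact div_sub_div _ _ (ne_of_gt hT567) (ne_of_gt hT367)
  have hden20 : (0:ℝ) < (tdet (w 5) (w 6) (w 7) * tdet (w 3) (w 6) (w 7)) := mul_pos hT567 hT367
  have hQ20 : 0 < ((dperp (w 5) (w 6) * h 7 + dperp (w 7) (w 5) * h 6 + dperp (w 6) (w 7) * h 5) * tdet (w 3) (w 6) (w 7) - tdet (w 5) (w 6) (w 7) * (dperp (w 3) (w 6) * h 7 + dperp (w 7) (w 3) * h 6 + dperp (w 6) (w 7) * h 3)) := by
    have hq : 0 < ((dperp (w 5) (w 6) * h 7 + dperp (w 7) (w 5) * h 6 + dperp (w 6) (w 7) * h 5) * tdet (w 3) (w 6) (w 7) - tdet (w 5) (w 6) (w 7) * (dperp (w 3) (w 6) * h 7 + dperp (w 7) (w 3) * h 6 + dperp (w 6) (w 7) * h 3)) / (tdet (w 5) (w 6) (w 7) * tdet (w 3) (w 6) (w 7)) := by rw [← hz'20]; exact sub_pos.mpr hz20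
    have h2 := mul_pos hq hden20
    rwa [div_mul_cancel₀ _ (ne_of_gt hden20)] at h2
  have hE20 : ((dperp (w 5) (w 6) * h 7 + dperp (w 7) (w 5) * h 6 + dperp (w 6) (w 7) * h 5) * tdet (w 3) (w 6) (w 7) - tdet (w 5) (w 6) (w 7) * (dperp (w 3) (w 6) * h 7 + dperp (w 7) (w 3) * h 6 + dperp (w 6) (w 7) * h 3)) = -(dperp (w 6) (w 7) * (tdet (w 5) (w 6) (w 7) * h 3 - tdet (w 3) (w 6) (w 7) * h 5 + tdet (w 3) (w 5) (w 7) * h 6 - tdet (w 3) (w 5) (w 6) * h 7)) := by simp only [tdet, dperp]; ring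
  rw [hE20] at hQ20
  have hQn20 : dperp (w 6) (w 7) * (tdet (w 5) (w 6) (w 7) * h 3 - tdet (w 3) (w 6) (w 7) * h 5 + tdet (w 3) (w 5) (w 7) * h 6 - tdet (w 3) (w 5) (w 6) * h 7) < 0 := by linarith
  have hD3567 : (tdet (w 5) (w 6) (w 7) * h 3 - tdet (w 3) (w 6) (w 7) * h 5 + tdet (w 3) (w 5) (w 7) * h 6 - tdet (w 3) (w 5) (w 6) * h 7) < 0 := neg_of_pos_mul hd67 hQn20
  -- Plücker-type deductions
  have rel1 : -(tdet (w 0) (w 3) (w 6) * (tdet (w 1) (w 2) (w 6) * h 0 - tdet (w 0) (w 2) (w 6) * h 1 + tdet (w 0) (w 1) (w 6) * h 2 - tdet (w 0) (w 1) (w 2) * h 6)) + tdet (w 0) (w 2) (w 6) * (tdet (w 1) (w 3) (w 6) * h 0 - tdet (w 0) (w 3) (w 6) * h 1 + tdet (w 0) (w 1) (w 6) * h 3 - tdet (w 0) (w 1) (w 3) * h 6) - tdet (w 0) (w 1) (w 6) * (tdet (w 2) (w 3) (w 6) * h 0 - tdet (w 0) (w 3) (w 6) * h 2 + tdet (w 0)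 (w 2) (w 6) * h 3 - tdet (w 0) (w 2) (w 3) * h 6) = 0 := by simp only [tdet]; ring
  have hX1_0 : tdet (w 0) (w 3) (w 6) * (tdet (w 1) (w 2) (w 6) * h 0 - tdet (w 0) (w 2) (w 6) * h 1 + tdet (w 0) (w 1) (w 6) * h 2 - tdet (w 0) (w 1) (w 2) * h 6) < 0 := mul_neg_of_pos_of_neg hT036 hD0126
  have hX1_1 : tdet (w 0) (w 1) (w 6) * (tdet (w 2) (w 3) (w 6) * h 0 - tdet (w 0) (w 3) (w 6) * h 2 + tdet (w 0) (w 2) (w 6) * h 3 - tdet (w 0) (w 2) (w 3) * h 6) < 0 := mul_neg_of_pos_of_neg hT016 hD0236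
  have hX1_u : (tdet (w 1) (w 3) (w 6) * h 0 - tdet (w 0) (w 3) (w 6) * h 1 + tdet (w 0) (w 1) (w 6) * h 3 - tdet (w 0) (w 1) (w 3) * h 6) * tdet (w 0) (w 2) (w 6) < 0 := by linarith [rel1, hX1_0, hX1_1]
  have hT026 : tdet (w 0) (w 2) (w 6) < 0 := neg_of_pos_mul hD0136 hX1_u
  have rel2 : -(tdet (w 0) (w 5) (w 6) * (tdet (w 2) (w 3) (w 6) * h 0 - tdet (w 0) (w 3) (w 6) * h 2 + tdet (w 0) (w 2) (w 6) * h 3 - tdet (w 0) (w 2) (w 3) * h 6)) + tdet (w 0) (w 3) (w 6) * (tdet (w 2) (w 5) (w 6) * h 0 - tdet (w 0) (w 5) (w 6) * h 2 + tdet (w 0) (w 2) (w 6) * h 5 - tdet (w 0) (w 2) (w 5) * h 6) - tdet (w 0) (w 2) (w 6) * (tdet (w 3) (w 5) (w 6) * h 0 - tdet (w 0) (w 5) (w 6) * h 3 + tdet (w 0) (w 3) (w 6) * h 5 - tdet (w 0) (w 3) (w 5) * h 6) = 0 := by simp only [tdet]; ring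
  have hX2_0 : tdet (w 0) (w 5) (w 6) * (tdet (w 2) (w 3) (w 6) * h 0 - tdet (w 0) (w 3) (w 6) * h 2 + tdet (w 0) (w 2) (w 6) * h 3 - tdet (w 0) (w 2) (w 3) * h 6) < 0 := mul_neg_of_pos_of_neg hT056 hD0236
  have hX2_1 : 0 < tdet (w 0) (w 3) (w 6) * (tdet (w 2) (w 5) (w 6) * h 0 - tdet (w 0) (w 5) (w 6) * h 2 + tdet (w 0) (w 2) (w 6) * h 5 - tdet (w 0) (w 2) (w 5) * h 6) := mul_pos hT036 hD0256
  have hX2_u : 0 < tdet (w 0) (w 2) (w 6) * (tdet (w 3) (w 5) (w 6) * h 0 - tdet (w 0) (w 5) (w 6) * h 3 + tdet (w 0) (w 3) (w 6) * h 5 - tdet (w 0) (w 3) (w 5) * h 6) := by linarith [rel2, hX2_0, hX2_1]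
  have hD0356 : (tdet (w 3) (w 5) (w 6) * h 0 - tdet (w 0) (w 5) (w 6) * h 3 + tdet (w 0) (w 3) (w 6) * h 5 - tdet (w 0) (w 3) (w 5) * h 6) < 0 := neg_of_neg_mul hT026 hX2_u
  have rel3 : tdet (w 3) (w 6) (w 7) * (tdet (w 2) (w 3) (w 6) * h 0 - tdet (w 0) (w 3) (w 6) * h 2 + tdet (w 0) (w 2) (w 6) * h 3 - tdet (w 0) (w 2) (w 3) * h 6) - tdet (w 2) (w 3) (w 6) * (tdet (w 3) (w 6) (w 7) * h 0 - tdet (w 0) (w 6) (w 7) * h 3 + tdet (w 0) (w 3) (w 7) * h 6 - tdet (w 0) (w 3) (w 6) * h 7) + tdet (w 0) (w 3) (w 6) * (tdet (w 3) (w 6) (w 7) * h 2 - tdet (w 2) (w 6) (w 7) * h 3 + tdet (w 2) (w 3) (w 7) * h 6 - tdet (w 2) (w 3) (w 6) * h 7) = 0 := by simp only [tdet]; ring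
  have hX3_0 : tdet (w 3) (w 6) (w 7) * (tdet (w 2) (w 3) (w 6) * h 0 - tdet (w 0) (w 3) (w 6) * h 2 + tdet (w 0) (w 2) (w 6) * h 3 - tdet (w 0) (w 2) (w 3) * h 6) < 0 := mul_neg_of_pos_of_neg hT367 hD0236
  have hX3_1 : tdet (w 0) (w 3) (w 6) * (tdet (w 3) (w 6) (w 7) * h 2 - tdet (w 2) (w 6) (w 7) * h 3 + tdet (w 2) (w 3) (w 7) * h 6 - tdet (w 2) (w 3) (w 6) * h 7) < 0 := mul_neg_of_pos_of_neg hT036 hD2367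
  have hX3_u : tdet (w 2) (w 3) (w 6) * (tdet (w 3) (w 6) (w 7) * h 0 - tdet (w 0) (w 6) (w 7) * h 3 + tdet (w 0) (w 3) (w 7) * h 6 - tdet (w 0) (w 3) (w 6) * h 7) < 0 := by linarith [rel3, hX3_0, hX3_1]
  have hD0367 : (tdet (w 3) (w 6) (w 7) * h 0 - tdet (w 0) (w 6) (w 7) * h 3 + tdet (w 0) (w 3) (w 7) * h 6 - tdet (w 0) (w 3) (w 6) * h 7) < 0 := neg_of_pos_mul hT236 hX3_u
  have rel4 : -(tdet (w 3) (w 6) (w 7) * (tdet (w 3) (w 5) (w 6) * h 0 - tdet (w 0) (w 5) (w 6) * h 3 + tdet (w 0) (w 3) (w 6) * h 5 - tdet (w 0) (w 3) (w 5) * h 6)) + tdet (w 3) (w 5) (w 6) * (tdet (w 3) (w 6) (w 7) * h 0 - tdet (w 0) (w 6) (w 7) * h 3 + tdet (w 0) (w 3) (w 7) * h 6 - tdet (w 0) (w 3) (w 6) * h 7) - tdet (w 0) (w 3) (w 6) * (tdet (w 5) (w 6) (w 7) * h 3 - tdet (w 3) (w 6) (w 7) * h 5 + tdet (w 3) (w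 5) (w 7) * h 6 - tdet (w 3) (w 5) (w 6) * h 7) = 0 := by simp only [tdet]; ring
  have hX4_0 : tdet (w 3) (w 6) (w 7) * (tdet (w 3) (w 5) (w 6) * h 0 - tdet (w 0) (w 5) (w 6) * h 3 + tdet (w 0) (w 3) (w 6) * h 5 - tdet (w 0) (w 3) (w 5) * h 6) < 0 := mul_neg_of_pos_of_neg hT367 hD0356
  have hX4_1 : tdet (w 0) (w 3) (w 6) * (tdet (w 5) (w 6) (w 7) * h 3 - tdet (w 3) (w 6) (w 7) * h 5 + tdet (w 3) (w 5) (w 7) * h 6 - tdet (w 3) (w 5) (w 6) * h 7) < 0 := mul_neg_of_pos_of_neg hT036 hD3567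
  have hX4_u : (tdet (w 3) (w 6) (w 7) * h 0 - tdet (w 0) (w 6) (w 7) * h 3 + tdet (w 0) (w 3) (w 7) * h 6 - tdet (w 0) (w 3) (w 6) * h 7) * tdet (w 3) (w 5) (w 6) < 0 := by linarith [rel4, hX4_0, hX4_1]
  have hT356 : 0 < tdet (w 3) (w 5) (w 6) := pos_of_neg_mul hD0367 hX4_u
  have rel5 : tdet (w 4) (w 5) (w 6) * (tdet (w 2) (w 5) (w 6) * h 0 - tdet (w 0) (w 5) (w 6) * h 2 + tdet (w 0) (w 2) (w 6) * h 5 - tdet (w 0) (w 2) (w 5) * h 6) - tdet (w 2) (w 5) (w 6) * (tdet (w 4) (w 5) (w 6) * h 0 - tdet (w 0) (w 5) (w 6) * h 4 + tdet (w 0) (w 4) (w 6) * h 5 - tdet (w 0) (w 4) (w 5) * h 6) + tdet (w 0) (w 5) (w 6) * (tdet (w 4) (w 5) (w 6) * h 2 - tdet (w 2) (w 5) (w 6) * h 4 + tdet (w 2) (w 4) (w 6) * h 5 - tdet (w 2) (w 4) (w 5) * h 6) = 0 := by simp only [tdet]; ring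
  have hX5_0 : 0 < tdet (w 4) (w 5) (w 6) * (tdet (w 2) (w 5) (w 6) * h 0 - tdet (w 0) (w 5) (w 6) * h 2 + tdet (w 0) (w 2) (w 6) * h 5 - tdet (w 0) (w 2) (w 5) * h 6) := mul_pos hT456 hD0256
  have hX5_1 : tdet (w 2) (w 5) (w 6) * (tdet (w 4) (w 5) (w 6) * h 0 - tdet (w 0) (w 5) (w 6) * h 4 + tdet (w 0) (w 4) (w 6) * h 5 - tdet (w 0) (w 4) (w 5) * h 6) < 0 := mul_neg_of_pos_of_neg hT256 hD0456
  have hX5_u : tdet (w 0) (w 5) (w 6) * (tdet (w 4) (w 5) (w 6) * h 2 - tdet (w 2) (w 5) (w 6) * h 4 + tdet (w 2) (w 4) (w 6) * h 5 - tdet (w 2) (w 4) (w 5) * h 6) < 0 := by linarith [rel5, hX5_0, hX5_1]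
  have hD2456 : (tdet (w 4) (w 5) (w 6) * h 2 - tdet (w 2) (w 5) (w 6) * h 4 + tdet (w 2) (w 4) (w 6) * h 5 - tdet (w 2) (w 4) (w 5) * h 6) < 0 := neg_of_pos_mul hT056 hX5_u
  have rel6 : tdet (w 2) (w 5) (w 8) * (tdet (w 2) (w 5) (w 6) * h 1 - tdet (w 1) (w 5) (w 6) * h 2 + tdet (w 1) (w 2) (w 6) * h 5 - tdet (w 1) (w 2) (w 5) * h 6) - tdet (w 2) (w 5) (w 6) * (tdet (w 2) (w 5) (w 8) * h 1 - tdet (w 1) (w 5) (w 8) * h 2 + tdet (w 1) (w 2) (w 8) * h 5 - tdet (w 1) (w 2) (w 5) * h 8) + tdet (w 1) (w 2) (w 5) * (tdet (w 5) (w 6) (w 8) * h 2 - tdet (w 2) (w 6) (w 8) * h 5 + tdet (w 2) (w 5) (w 8) * h 6 - tdet (w 2) (w 5) (w 6) * h 8) = 0 := by simp only [tdet]; ring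
  have hX6_0 : tdet (w 2) (w 5) (w 8) * (tdet (w 2) (w 5) (w 6) * h 1 - tdet (w 1) (w 5) (w 6) * h 2 + tdet (w 1) (w 2) (w 6) * h 5 - tdet (w 1) (w 2) (w 5) * h 6) < 0 := mul_neg_of_pos_of_neg hT258 hD1256
  have hX6_1 : 0 < tdet (w 2) (w 5) (w 6) * (tdet (w 2) (w 5) (w 8) * h 1 - tdet (w 1) (w 5) (w 8) * h 2 + tdet (w 1) (w 2) (w 8) * h 5 - tdet (w 1) (w 2) (w 5) * h 8) := mul_pos hT256 hD1258
  have hX6_u : 0 < tdet (w 1) (w 2) (w 5) * (tdet (w 5) (w 6) (w 8) * h 2 - tdet (w 2) (w 6) (w 8) * h 5 + tdet (w 2) (w 5) (w 8) * h 6 - tdet (w 2) (w 5) (w 6) * h 8) := by linarith [rel6, hX6_0, hX6_1]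
  have hD2568 : 0 < (tdet (w 5) (w 6) (w 8) * h 2 - tdet (w 2) (w 6) (w 8) * h 5 + tdet (w 2) (w 5) (w 8) * h 6 - tdet (w 2) (w 5) (w 6) * h 8) := pos_of_pos_mul hT125 hX6_u
  have rel7 : tdet (w 5) (w 6) (w 8) * (tdet (w 4) (w 5) (w 6) * h 2 - tdet (w 2) (w 5) (w 6) * h 4 + tdet (w 2) (w 4) (w 6) * h 5 - tdet (w 2) (w 4) (w 5) * h 6) - tdet (w 4) (w 5) (w 6) * (tdet (w 5) (w 6) (w 8) * h 2 - tdet (w 2) (w 6) (w 8) * h 5 + tdet (w 2) (w 5) (w 8) * h 6 - tdet (w 2) (w 5) (w 6) * h 8) + tdet (w 2) (w 5) (w 6) * (tdet (w 5) (w 6) (w 8) * h 4 - tdet (w 4) (w 6) (w 8) * h 5 + tdet (w 4) (w 5) (w 8) * h 6 - tdet (w 4) (w 5) (w 6) * h 8) = 0 := by simp only [tdet]; ring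
  have hX7_0 : 0 < tdet (w 4) (w 5) (w 6) * (tdet (w 5) (w 6) (w 8) * h 2 - tdet (w 2) (w 6) (w 8) * h 5 + tdet (w 2) (w 5) (w 8) * h 6 - tdet (w 2) (w 5) (w 6) * h 8) := mul_pos hT456 hD2568
  have hX7_1 : tdet (w 2) (w 5) (w 6) * (tdet (w 5) (w 6) (w 8) * h 4 - tdet (w 4) (w 6) (w 8) * h 5 + tdet (w 4) (w 5) (w 8) * h 6 - tdet (w 4) (w 5) (w 6) * h 8) < 0 := mul_neg_of_pos_of_neg hT256 hD4568
  have hX7_u : 0 < (tdet (w 4) (w 5) (w 6) * h 2 - tdet (w 2) (w 5) (w 6) * h 4 + tdet (w 2) (w 4) (w 6) * h 5 - tdet (w 2) (w 4) (w 5) * h 6) * tdet (w 5) (w 6) (w 8) := by linarith [rel7, hX7_0, hX7_1]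
  have hT568 : tdet (w 5) (w 6) (w 8) < 0 := neg_of_neg_mul hD2456 hX7_u
  have rel8 : -(tdet (w 5) (w 6) (w 8) * (tdet (w 2) (w 5) (w 8) * h 0 - tdet (w 0) (w 5) (w 8) * h 2 + tdet (w 0) (w 2) (w 8) * h 5 - tdet (w 0) (w 2) (w 5) * h 8)) + tdet (w 2) (w 5) (w 8) * (tdet (w 5) (w 6) (w 8) * h 0 - tdet (w 0) (w 6) (w 8) * h 5 + tdet (w 0) (w 5) (w 8) * h 6 - tdet (w 0) (w 5) (w 6) * h 8) - tdet (w 0) (w 5) (w 8) * (tdet (w 5) (w 6) (w 8) * h 2 - tdet (w 2) (w 6) (w 8) * h 5 + tdet (w 2) (w 5) (w 8) * h 6 - tdet (w 2) (w 5) (w 6) * h 8) = 0 := by simp only [tdet]; ring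
  have hX8_0 : 0 < tdet (w 5) (w 6) (w 8) * (tdet (w 2) (w 5) (w 8) * h 0 - tdet (w 0) (w 5) (w 8) * h 2 + tdet (w 0) (w 2) (w 8) * h 5 - tdet (w 0) (w 2) (w 5) * h 8) := mul_pos_of_neg_of_neg hT568 hD0258
  have hX8_1 : 0 < tdet (w 0) (w 5) (w 8) * (tdet (w 5) (w 6) (w 8) * h 2 - tdet (w 2) (w 6) (w 8) * h 5 + tdet (w 2) (w 5) (w 8) * h 6 - tdet (w 2) (w 5) (w 6) * h 8) := mul_pos hT058 hD2568
  have hX8_u : 0 < tdet (w 2) (w 5) (w 8) * (tdet (w 5) (w 6) (w 8) * h 0 - tdet (w 0) (w 6) (w 8) * h 5 + tdet (w 0) (w 5) (w 8) * h 6 - tdet (w 0) (w 5) (w 6) * h 8) := by linarith [rel8, hX8_0, hX8_1]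
  have hD0568 : 0 < (tdet (w 5) (w 6) (w 8) * h 0 - tdet (w 0) (w 6) (w 8) * h 5 + tdet (w 0) (w 5) (w 8) * h 6 - tdet (w 0) (w 5) (w 6) * h 8) := pos_of_pos_mul hT258 hX8_u
  have rel9 : -(tdet (w 0) (w 5) (w 8) * (tdet (w 3) (w 5) (w 6) * h 0 - tdet (w 0) (w 5) (w 6) * h 3 + tdet (w 0) (w 3) (w 6) * h 5 - tdet (w 0) (w 3) (w 5) * h 6)) + tdet (w 0) (w 5) (w 6) * (tdet (w 3) (w 5) (w 8) * h 0 - tdet (w 0) (w 5) (w 8) * h 3 + tdet (w 0) (w 3) (w 8) * h 5 - tdet (w 0) (w 3) (w 5) * h 8) - tdet (w 0) (w 3) (w 5) * (tdet (w 5) (w 6) (w 8) * h 0 - tdet (w 0) (w 6) (w 8) * h 5 + tdet (w 0) (w 5) (w 8) * h 6 - tdet (w 0) (w 5) (w 6) * h 8) = 0 := by simp only [tdet]; ring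
  have hX9_0 : tdet (w 0) (w 5) (w 8) * (tdet (w 3) (w 5) (w 6) * h 0 - tdet (w 0) (w 5) (w 6) * h 3 + tdet (w 0) (w 3) (w 6) * h 5 - tdet (w 0) (w 3) (w 5) * h 6) < 0 := mul_neg_of_pos_of_neg hT058 hD0356
  have hX9_1 : 0 < tdet (w 0) (w 5) (w 6) * (tdet (w 3) (w 5) (w 8) * h 0 - tdet (w 0) (w 5) (w 8) * h 3 + tdet (w 0) (w 3) (w 8) * h 5 - tdet (w 0) (w 3) (w 5) * h 8) := mul_pos hT056 hD0358
  have hX9_u : 0 < (tdet (w 5) (w 6) (w 8) * h 0 - tdet (w 0) (w 6) (w 8) * h 5 + tdet (w 0) (w 5) (w 8) * h 6 - tdet (w 0) (w 5) (w 6) * h 8) * tdet (w 0) (w 3) (w 5) := by linarith [rel9, hX9_0, hX9_1]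
  have hT035 : 0 < tdet (w 0) (w 3) (w 5) := pos_of_pos_mul hD0568 hX9_u
  have rel10 : tdet (w 4) (w 5) (w 8) * (tdet (w 3) (w 4) (w 5) * h 1 - tdet (w 1) (w 4) (w 5) * h 3 + tdet (w 1) (w 3) (w 5) * h 4 - tdet (w 1) (w 3) (w 4) * h 5) - tdet (w 3) (w 4) (w 5) * (tdet (w 4) (w 5) (w 8) * h 1 - tdet (w 1) (w 5) (w 8) * h 4 + tdet (w 1) (w 4) (w 8) * h 5 - tdet (w 1) (w 4) (w 5) * h 8) + tdet (w 1) (w 4) (w 5) * (tdet (w 4) (w 5) (w 8) * h 3 - tdet (w 3) (w 5) (w 8) * h 4 + tdet (w 3) (w 4) (w 8) * h 5 - tdet (w 3) (w 4) (w 5) * h 8) = 0 := by simp only [tdet]; ring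
  have hX10_0 : tdet (w 4) (w 5) (w 8) * (tdet (w 3) (w 4) (w 5) * h 1 - tdet (w 1) (w 4) (w 5) * h 3 + tdet (w 1) (w 3) (w 5) * h 4 - tdet (w 1) (w 3) (w 4) * h 5) < 0 := mul_neg_of_pos_of_neg hT458 hD1345
  have hX10_1 : 0 < tdet (w 3) (w 4) (w 5) * (tdet (w 4) (w 5) (w 8) * h 1 - tdet (w 1) (w 5) (w 8) * h 4 + tdet (w 1) (w 4) (w 8) * h 5 - tdet (w 1) (w 4) (w 5) * h 8) := mul_pos hT345 hD1458
  have hX10_u : 0 < tdet (w 1) (w 4) (w 5) * (tdet (w 4) (w 5) (w 8) * h 3 - tdet (w 3) (w 5) (w 8) * h 4 + tdet (w 3) (w 4) (w 8) * h 5 - tdet (w 3) (w 4) (w 5) * h 8) := by linarith [rel10, hX10_0, hX10_1]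
  have hD3458 : 0 < (tdet (w 4) (w 5) (w 8) * h 3 - tdet (w 3) (w 5) (w 8) * h 4 + tdet (w 3) (w 4) (w 8) * h 5 - tdet (w 3) (w 4) (w 5) * h 8) := pos_of_pos_mul hT145 hX10_u
  have rel11 : tdet (w 4) (w 5) (w 8) * (tdet (w 4) (w 5) (w 6) * h 3 - tdet (w 3) (w 5) (w 6) * h 4 + tdet (w 3) (w 4) (w 6) * h 5 - tdet (w 3) (w 4) (w 5) * h 6) - tdet (w 4) (w 5) (w 6) * (tdet (w 4) (w 5) (w 8) * h 3 - tdet (w 3) (w 5) (w 8) * h 4 + tdet (w 3) (w 4) (w 8) * h 5 - tdet (w 3) (w 4) (w 5) * h 8) + tdet (w 3) (w 4) (w 5) * (tdet (w 5) (w 6) (w 8) * h 4 - tdet (w 4) (w 6) (w 8) * h 5 + tdet (w 4) (w 5) (w 8) * h 6 - tdet (w 4) (w 5) (w 6) * h 8) = 0 := by simp only [tdet]; ring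
  have hX11_0 : 0 < tdet (w 4) (w 5) (w 6) * (tdet (w 4) (w 5) (w 8) * h 3 - tdet (w 3) (w 5) (w 8) * h 4 + tdet (w 3) (w 4) (w 8) * h 5 - tdet (w 3) (w 4) (w 5) * h 8) := mul_pos hT456 hD3458
  have hX11_1 : tdet (w 3) (w 4) (w 5) * (tdet (w 5) (w 6) (w 8) * h 4 - tdet (w 4) (w 6) (w 8) * h 5 + tdet (w 4) (w 5) (w 8) * h 6 - tdet (w 4) (w 5) (w 6) * h 8) < 0 := mul_neg_of_pos_of_neg hT345 hD4568
  have hX11_u : 0 < tdet (w 4) (w 5) (w 8) * (tdet (w 4) (w 5) (w 6) * h 3 - tdet (w 3) (w 5) (w 6) * h 4 + tdet (w 3) (w 4) (w 6) * h 5 - tdet (w 3) (w 4) (w 5) * h 6) := by linarith [rel11, hX11_0, hX11_1]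
  have hD3456 : 0 < (tdet (w 4) (w 5) (w 6) * h 3 - tdet (w 3) (w 5) (w 6) * h 4 + tdet (w 3) (w 4) (w 6) * h 5 - tdet (w 3) (w 4) (w 5) * h 6) := pos_of_pos_mul hT458 hX11_u
  have relF : -(tdet (w 3) (w 5) (w 6) * (tdet (w 3) (w 4) (w 5) * h 0 - tdet (w 0) (w 4) (w 5) * h 3 + tdet (w 0) (w 3) (w 5) * h 4 - tdet (w 0) (w 3) (w 4) * h 5)) + tdet (w 3) (w 4) (w 5) * (tdet (w 3) (w 5) (w 6) * h 0 - tdet (w 0) (w 5) (w 6) * h 3 + tdet (w 0) (w 3) (w 6) * h 5 - tdet (w 0) (w 3) (w 5) * h 6) - tdet (w 0) (w 3) (w 5) * (tdet (w 4) (w 5) (w 6) * h 3 - tdet (w 3) (w 5) (w 6) * h 4 + tdet (w 3) (w 4) (w 6) * h 5 - tdet (w 3) (w 4) (w 5) * h 6) = 0 := by simp only [tdet]; ring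
  have hF_0 : 0 < tdet (w 3) (w 5) (w 6) * (tdet (w 3) (w 4) (w 5) * h 0 - tdet (w 0) (w 4) (w 5) * h 3 + tdet (w 0) (w 3) (w 5) * h 4 - tdet (w 0) (w 3) (w 4) * h 5) := mul_pos hT356 hD0345
  have hF_1 : tdet (w 3) (w 4) (w 5) * (tdet (w 3) (w 5) (w 6) * h 0 - tdet (w 0) (w 5) (w 6) * h 3 + tdet (w 0) (w 3) (w 6) * h 5 - tdet (w 0) (w 3) (w 5) * h 6) < 0 := mul_neg_of_pos_of_neg hT345 hD0356
  have hF_2 : 0 < tdet (w 0) (w 3) (w 5) * (tdet (w 4) (w 5) (w 6) * h 3 - tdet (w 3) (w 5) (w 6) * h 4 + tdet (w 3) (w 4) (w 6) * h 5 - tdet (w 3) (w 4) (w 5) * h 6) := mul_pos hT035 hD3456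
  linarith [relF, hF_0, hF_1, hF_2]

end
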